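/- arXiv:2004.03942 — 3 statements merged into one kernel-verified Lean document; each statement's English description precedes it below -/
import Mathlib

section
/- The lexicographic priority order on jobs refines Johnson's rule: if job J_j has priority vector χ_j = (1, a_j, j) when a_j ≤ b_j and χ_j = (2, −b_j, j) otherwise, and χ_j <_lex χ_k, then min(a_j, b_k) ≤ min(a_k, b_j). -/
/-- The priority vector of a job: `(1, a_j, j)` if `a_j ≤ b_j`, else `(2, -b_j, j)`. -/
noncomputable def priorityVector (a b : ℕ → ℝ) (j : ℕ) : ℕ × ℝ × ℕ :=
  if a j ≤ b j then (1, a j, j) else (2, -b j, j)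

/-- Lexicographic strict order on priority vectors. -/
def lexLt (x y : ℕ × ℝ × ℕ) : Prop :=
  x.1 < y.1 ∨ (x.1 = y.1 ∧ (x.2.1 < y.2.1 ∨ (x.2.1 = y.2.1 ∧ x.2.2 < y.2.2)))

/-! The lexicographic order puts the jobs with `a ≤ b` first, by increasing `a`, and the others
after them, by decreasing `b`. In each of the three resulting cases both `a k` and `b j` dominate
`a j` or `b k`, which is Johnson's inequality. -/

namespace lexLt

variable {x y : ℕ × ℝ × ℕ}

theorem fst_le (h : lexLt x y) : x.1 ≤ y.1 := by
  rcases h with h | ⟨h, -⟩ <;> omega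

theorem snd_fst_le (h : lexLt x y) (h₁ : x.1 = y.1) : x.2.1 ≤ y.2.1 := by
  rcases h with h | ⟨-, h | ⟨h, -⟩⟩
  · exact absurd h₁ h.ne
  · exact h.le
  · exact h.le

end lexLt

theorem priority_lex_implies_johnson_general (a b : ℕ → ℝ)
    (j k : ℕ)
    (h : lexLt (priorityVector a b j) (priorityVector a b k)) :
    min (a j) (b k) ≤ min (a k) (b j) := by
  have hfst := h.fst_le
  have hsnd := h.snd_fst_le
  simp only [le_min_iff, min_le_iff]
  unfold priorityVector at hfst hsnd
  split_ifs at hfst hsnd with hj hk hk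
  · exact ⟨.inl (hsnd rfl), .inl hj⟩
  · exact ⟨.inr (not_le.1 hk).le, .inl hj⟩
  · exact absurd hfst (by norm_num)
  · exact ⟨.inr (not_le.1 hk).le, .inr (neg_le_neg_iff.1 (hsnd rfl))⟩

/-- The lexicographic priority order refines Johnson's rule: if
`χ_j <_lex χ_k` then `min(a_j, b_k) ≤ min(a_k, b_j)`. -/
theorem priority_lex_implies_johnson (a b : ℕ → ℝ)
    (ha : ∀ j, 0 ≤ a j) (hb : ∀ j, 0 ≤ b j) (j k : ℕ)
    (h : lexLt (priorityVector a b j) (priorityVector a b k)) :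
    min (a j) (b k) ≤ min (a k) (b j) :=
  priority_lex_implies_johnson_general a b j k h
end

section
/- Exchange lemma for Johnson's rule: if in a two-machine permutation flow shop schedule jobs J_j and J_k are adjacent with J_j immediately before J_k, and min(a_k, b_j) ≤ min(a_j, b_k), then swapping the two jobs does not increase the makespan. -/
/-- Makespan formula for the two-machine permutation flow shop processing the jobs of
list `l` in order: `max_{1 ≤ k ≤ n} (∑_{i=1}^k a_i + ∑_{i=k}^n b_i)`. -/
noncomputable def flowMakespan {ι : Type*} (a b : ι → ℝ) (l : List ι) : ℝ :=
  (Finset.Icc 1 l.length).fold max 0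
    (fun k => ((l.take k).map a).sum + ((l.drop (k - 1)).map b).sum)

/-!
Swapping the adjacent jobs `x, y` only changes the two path lengths whose switching job lies
in the pair. Writing `S` for the total of `a` over the jobs up to the pair, of `a x, a y, b x, b y`,
and of `b` over the jobs after the pair, these two terms have maximum `S - min (a y) (b x)`
for the order `x, y` and `S - min (a x) (b y)` for the order `y, x`; Johnson's condition
compares exactly these.
-/

namespace FlowShop

variable {ι : Type*} (a b : ι → ℝ)

/-- Length of the path through the schedule `l` that switches from machine `A` to machine `B` at
the `k`-th job (counting from 1). -/
def pathLength (l : List ι) (k : ℕ) : ℝ :=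
  ((l.take k).map a).sum + ((l.drop (k - 1)).map b).sum

theorem flowMakespan_le_iff (l : List ι) (c : ℝ) :
    flowMakespan a b l ≤ c ↔ 0 ≤ c ∧ ∀ k ∈ Finset.Icc 1 l.length, pathLength a b l k ≤ c :=
  Finset.fold_max_le c

theorem flowMakespan_nonneg (l : List ι) : 0 ≤ flowMakespan a b l :=
  (Finset.le_fold_max 0).2 (Or.inl le_rfl)

theorem pathLength_le_flowMakespan {l : List ι} {k : ℕ} (hk : k ∈ Finset.Icc 1 l.length) :
    pathLength a b l k ≤ flowMakespan a b l :=
  (Finset.le_fold_max _).2 (Or.inr ⟨k, hk, le_rfl⟩)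

variable {a b}

theorem pathLength_perm_block_of_le {u v v' w : List ι} (hv : v.Perm v') {k : ℕ}
    (hk : k ≤ u.length) :
    pathLength a b (u ++ v ++ w) k = pathLength a b (u ++ v' ++ w) k := by
  have hk' : k - 1 ≤ u.length := by omega
  simp only [pathLength, List.append_assoc, List.take_append_of_le_length hk,
    List.drop_append_of_le_length hk', List.map_append, List.sum_append, (hv.map b).sum_eq]

theorem pathLength_perm_block_of_lt {u v v' w : List ι} (hv : v.Perm v') {k : ℕ}
    (hk : u.length + v.length < k) :
    pathLength a b (u ++ v ++ w) k = pathLength a b (u ++ v' ++ w) k := by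
  have hlen : (u ++ v).length = (u ++ v').length := by simp [hv.length_eq]
  have hk' : (u ++ v).length ≤ k - 1 := by simp only [List.length_append]; omega
  have hk'' : (u ++ v').length ≤ k - 1 := hlen ▸ hk'
  simp only [pathLength, List.take_append, List.drop_append, hlen,
    List.take_of_length_le (hk'.trans (Nat.sub_le k 1)),
    List.take_of_length_le (hk''.trans (Nat.sub_le k 1)),
    List.drop_eq_nil_of_le hk', List.drop_eq_nil_of_le hk'', List.nil_append,
    List.map_append, List.sum_append, (hv.map a).sum_eq]

theorem pathLength_perm_block {u v v' w : List ι} (hv : v.Perm v') {k : ℕ}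
    (hk : k ≤ u.length ∨ u.length + v.length < k) :
    pathLength a b (u ++ v ++ w) k = pathLength a b (u ++ v' ++ w) k :=
  hk.elim (pathLength_perm_block_of_le hv) (pathLength_perm_block_of_lt hv)

theorem pathLength_append_cons (u v : List ι) (x : ι) :
    pathLength a b (u ++ x :: v) (u.length + 1) =
      (u.map a).sum + a x + b x + (v.map b).sum := by
  have htake : (u ++ x :: v).take (u.length + 1) = u ++ [x] := by simp [List.take_append]
  simp [pathLength, htake, add_assoc]

theorem max_pathLength_pair (u w : List ι) (x y : ι) :
    max (pathLength a b (u ++ x :: y :: w) (u.length + 1))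
        (pathLength a b (u ++ x :: y :: w) (u.length + 2)) =
      (u.map a).sum + a x + a y + b x + b y + (w.map b).sum - min (a y) (b x) := by
  have hsecond := pathLength_append_cons (a := a) (b := b) (u ++ [x]) w y
  simp only [List.append_assoc, List.singleton_append, List.length_append, List.length_singleton,
    List.map_append, List.sum_append, List.map_singleton, List.sum_singleton] at hsecond
  rw [pathLength_append_cons, hsecond, ← max_sub_sub_left, List.map_cons, List.sum_cons]
  congr 1 <;> ring

end FlowShop

open FlowShop in
theorem johnson_exchange_general {ι : Type*} (a b : ι → ℝ)
    (u w : List ι) (x y : ι)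
    (h : min (a y) (b x) ≤ min (a x) (b y)) :
    flowMakespan a b (u ++ y :: x :: w) ≤ flowMakespan a b (u ++ x :: y :: w) := by
  set L := u ++ y :: x :: w
  set R := u ++ x :: y :: w
  have hswap : [y, x].Perm [x, y] := .swap x y []
  have hmem : ∀ k, 1 ≤ k → k ≤ u.length + 2 → k ∈ Finset.Icc 1 R.length := fun k h₁ h₂ => by
    simp only [R, Finset.mem_Icc, List.length_append, List.length_cons]; omega
  have hpair : max (pathLength a b L (u.length + 1)) (pathLength a b L (u.length + 2)) ≤
      flowMakespan a b R := calc
    _ ≤ max (pathLength a b R (u.length + 1)) (pathLength a b R (u.length + 2)) := by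
      rw [max_pathLength_pair, max_pathLength_pair]; linarith
    _ ≤ flowMakespan a b R := max_le
      (pathLength_le_flowMakespan a b (hmem _ (by omega) (by omega)))
      (pathLength_le_flowMakespan a b (hmem _ (by omega) le_rfl))
  refine (flowMakespan_le_iff a b L _).2 ⟨flowMakespan_nonneg a b R, fun k hk => ?_⟩
  by_cases hk₁₂ : k = u.length + 1 ∨ k = u.length + 2
  · obtain rfl | rfl := hk₁₂
    exacts [le_of_max_le_left hpair, le_of_max_le_right hpair]
  have hkR : k ∈ Finset.Icc 1 R.length := by simpa [L, R] using hk
  calc pathLength a b L k = pathLength a b (u ++ [y, x] ++ w) k := by simp [L]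
    _ = pathLength a b (u ++ [x, y] ++ w) k := pathLength_perm_block hswap (by simp only [List.length_cons, List.length_nil]; omega)
    _ ≤ flowMakespan a b R := by simpa [R] using pathLength_le_flowMakespan a b hkR

/-- Exchange lemma for Johnson's rule: if jobs `x` (i.e. `J_j`) and `y` (i.e. `J_k`)
are adjacent with `x` immediately before `y`, and `min(a_k, b_j) ≤ min(a_j, b_k)`,
then swapping the two jobs does not increase the makespan. -/
theorem johnson_exchange {ι : Type*} (a b : ι → ℝ)
    (ha : ∀ j, 0 ≤ a j) (hb : ∀ j, 0 ≤ b j)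
    (u w : List ι) (x y : ι)
    (h : min (a y) (b x) ≤ min (a x) (b y)) :
    flowMakespan a b (u ++ y :: x :: w) ≤ flowMakespan a b (u ++ x :: y :: w) :=
  johnson_exchange_general a b u w x y h
end

section
/- Sorting by Johnson's rule minimizes the makespan of the two-machine permutation flow shop: a permutation π in which min(a_{π(i)}, b_{π(j)}) ≤ min(a_{π(j)}, b_{π(i)}) holds for all i < j achieves the minimum of max_{1 ≤ k ≤ n}(∑_{i=1}^k a_{π(i)} + ∑_{i=k}^n b_{π(i)}) over all permutations. -/
theorem Nat.forall_mem_Icc_one_succ {P : ℕ → Prop} (n : ℕ) :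
    (∀ k ∈ Finset.Icc 1 (n + 1), P k) ↔ P 1 ∧ ∀ k ∈ Finset.Icc 1 n, P (k + 1) := by
  simp only [Finset.mem_Icc]
  refine ⟨fun h => ⟨h 1 (by omega), fun k hk => h (k + 1) (by omega)⟩, ?_⟩
  rintro ⟨h₁, h⟩ (_ | _ | k) hk
  · omega
  · exact h₁
  · exact h (k + 1) (by omega)

section FlowShop

variable {ι : Type*} {a b : ι → ℝ}

theorem flowMakespan_le_iff (l : List ι) (c : ℝ) :
    flowMakespan a b l ≤ c ↔ 0 ≤ c ∧ ∀ k ∈ Finset.Icc 1 l.length,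
      ((l.take k).map a).sum + ((l.drop (k - 1)).map b).sum ≤ c :=
  Finset.fold_max_le c

theorem flowMakespan_cons (ha : ∀ j, 0 ≤ a j) (hb : ∀ j, 0 ≤ b j) (x : ι) (m : List ι) :
    flowMakespan a b (x :: m) = a x + max (b x + (m.map b).sum) (flowMakespan a b m) := by
  have hB : 0 ≤ (m.map b).sum := List.sum_nonneg (by simpa using fun j _ => hb j)
  refine eq_of_forall_ge_iff fun c => ?_
  rw [← le_sub_iff_add_le', max_le_iff, flowMakespan_le_iff, flowMakespan_le_iff,
    List.length_cons, Nat.forall_mem_Icc_one_succ]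
  simp only [List.take_succ_cons, List.take_zero, Nat.sub_self, List.drop_zero,
    Nat.add_sub_cancel, List.map_cons, List.map_nil, List.sum_cons, List.sum_nil]
  have hterm : ∀ k ∈ Finset.Icc 1 m.length,
      a x + ((m.take k).map a).sum + (((x :: m).drop k).map b).sum ≤ c ↔
        ((m.take k).map a).sum + ((m.drop (k - 1)).map b).sum ≤ c - a x := fun k hk => by
    rw [List.drop_cons (Finset.mem_Icc.1 hk).1, le_sub_iff_add_le', add_assoc]
  rw [forall₂_congr hterm]
  constructor
  · rintro ⟨-, hc, hk⟩
    exact ⟨by linarith, by linarith [hb x], hk⟩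
  · rintro ⟨hc, -, hk⟩
    exact ⟨by linarith [ha x, hb x], by linarith, hk⟩

theorem flowMakespan_cons_le_cons (ha : ∀ j, 0 ≤ a j) (hb : ∀ j, 0 ≤ b j) (x : ι)
    {m₁ m₂ : List ι} (hm : m₁.Perm m₂) (h : flowMakespan a b m₁ ≤ flowMakespan a b m₂) :
    flowMakespan a b (x :: m₁) ≤ flowMakespan a b (x :: m₂) := by
  rw [flowMakespan_cons ha hb, flowMakespan_cons ha hb, (hm.map b).sum_eq]
  gcongr

theorem flowMakespan_swap_le (ha : ∀ j, 0 ≤ a j) (hb : ∀ j, 0 ≤ b j) {u v : ι}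
    (huv : min (a u) (b v) ≤ min (a v) (b u)) (q : List ι) :
    flowMakespan a b (u :: v :: q) ≤ flowMakespan a b (v :: u :: q) := by
  have hv : a u ≤ a v ∨ b v ≤ a v := min_le_iff.1 (huv.trans (min_le_left _ _))
  have hu : a u ≤ b u ∨ b v ≤ b u := min_le_iff.1 (huv.trans (min_le_right _ _))
  simp only [flowMakespan_cons ha hb, List.map_cons, List.sum_cons, add_max]
  refine max_le ?_ (max_le ?_ ?_)
  · rcases hv with h | h
    · exact le_max_of_le_left (by linarith)
    · exact le_max_of_le_right (le_max_of_le_left (by linarith))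
  · rcases hu with h | h
    · exact le_max_of_le_left (by linarith)
    · exact le_max_of_le_right (le_max_of_le_left (by linarith))
  · exact le_max_of_le_right (le_max_of_le_right (by linarith))

theorem flowMakespan_cons_append_le (ha : ∀ j, 0 ≤ a j) (hb : ∀ j, 0 ≤ b j) {x : ι}
    (p q : List ι) (hx : ∀ y ∈ p, min (a x) (b y) ≤ min (a y) (b x)) :
    flowMakespan a b (x :: (p ++ q)) ≤ flowMakespan a b (p ++ x :: q) := by
  induction p with
  | nil => exact le_rfl
  | cons y p ih =>
    calc flowMakespan a b (x :: y :: (p ++ q))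
        ≤ flowMakespan a b (y :: x :: (p ++ q)) :=
          flowMakespan_swap_le ha hb (hx y List.mem_cons_self) _
      _ ≤ flowMakespan a b (y :: (p ++ x :: q)) :=
          flowMakespan_cons_le_cons ha hb y List.perm_middle.symm
            (ih fun z hz => hx z (List.mem_cons_of_mem y hz))

end FlowShop

/-- Sorting by Johnson's rule minimizes the two-machine permutation flow shop makespan:
if `l₁` is ordered so that `min(a_u, b_v) ≤ min(a_v, b_u)` whenever `u` appears before
`v`, then its makespan is at most that of any permutation `l₂` of the same jobs. -/
theorem johnson_rule_optimal {ι : Type*} (a b : ι → ℝ)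
    (ha : ∀ j, 0 ≤ a j) (hb : ∀ j, 0 ≤ b j)
    (l₁ l₂ : List ι) (hperm : l₁.Perm l₂)
    (hsorted : l₁.Pairwise (fun u v => min (a u) (b v) ≤ min (a v) (b u))) :
    flowMakespan a b l₁ ≤ flowMakespan a b l₂ := by
  induction l₁ generalizing l₂ with
  | nil => rw [← hperm.symm.eq_nil]
  | cons x t ih =>
    obtain ⟨hx, ht⟩ := List.pairwise_cons.1 hsorted
    obtain ⟨p, q, rfl⟩ := List.append_of_mem (hperm.subset List.mem_cons_self)
    have htpq : t.Perm (p ++ q) := (hperm.trans List.perm_middle).cons_inv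
    calc flowMakespan a b (x :: t)
        ≤ flowMakespan a b (x :: (p ++ q)) :=
          flowMakespan_cons_le_cons ha hb x htpq (ih (p ++ q) htpq ht)
      _ ≤ flowMakespan a b (p ++ x :: q) :=
          flowMakespan_cons_append_le ha hb p q
            fun y hy => hx y (htpq.symm.subset (List.mem_append_left q hy))
end
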